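/- arXiv:2201.02013 — 3 statements merged into one kernel-verified Lean document; each statement's English description precedes it below -/
import Mathlib

section
/- Let n ≥ 2 and let x, x' ∈ {0,1}^n satisfy wt(x) ≡ wt(x') (mod 4). Suppose d_1, e_1, d_2, e_2 ∈ {1,…,n} with d_1 ≠ e_1, d_2 ≠ e_2, E(x, d_1, e_1) = E(x', d_2, e_2), and either e_1 < d_1 ≤ e_2 < d_2 or e_2 < d_1 < e_1 ≤ d_2. Define λ_2 = e_2 + 1 in the first case and λ_2 = e_1 in the second case, and let u_i = Σ_{ℓ=i}^n x_ℓ − Σ_{ℓ=i}^n x'_ℓ. Then: either u_i ≥ 0 for all i ∈ [1, λ_2 − 1] or u_i ≤ 0 for all i ∈ [1, λ_2 − 1]; either u_i ≥ 0 for all i ∈ [λ_2, n] or u_i ≤ 0 for all i ∈ [λ_2, n]; and |u_i| ≤ 2 for all i ∈ {1,…,n}. -/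
/-- The bit of `x` at 1-based position `p` (junk value `0` out of range). -/
def getBit {n : ℕ} (x : Fin n → Fin 2) (p : ℕ) : Fin 2 :=
  if h : p - 1 < n then x ⟨p - 1, h⟩ else 0

/-- Hamming weight of a binary sequence. -/
def wt {n : ℕ} (x : Fin n → Fin 2) : ℕ := ∑ i, (x i : ℕ)

/-- The `j`-th order VT syndrome `f_j(x) = Σ_{i=1}^n (Σ_{ℓ=1}^i ℓ^{j-1}) x_i`. -/
def vtSyn {n : ℕ} (j : ℕ) (x : Fin n → Fin 2) : ℕ :=
  ∑ i : Fin n, (∑ l ∈ Finset.Icc 1 ((i : ℕ) + 1), l ^ (j - 1)) * (x i : ℕ)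

/-- Substitute the symbol at 1-based position `e` of `x` with its complement. -/
def substAt {n : ℕ} (x : Fin n → Fin 2) (e : ℕ) : Fin n → Fin 2 :=
  fun i => if (i : ℕ) + 1 = e then 1 - x i else x i

/-- Delete the symbol at 1-based position `d` of `x`. -/
def delAt {n : ℕ} (x : Fin n → Fin 2) (d : ℕ) : Fin (n - 1) → Fin 2 :=
  fun i => if (i : ℕ) + 1 < d then getBit x ((i : ℕ) + 1) else getBit x ((i : ℕ) + 2)

/-- `E(x,d,e)`: delete the symbol at position `d` and substitute the symbol at
position `e` of `x` (positions are 1-based, taken in the original `x`). -/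
def delSub {n : ℕ} (x : Fin n → Fin 2) (d e : ℕ) : Fin (n - 1) → Fin 2 :=
  delAt (substAt x e) d

/-- The single-deletion single-substitution error ball `B_{1,1}(x)`. -/
def ball {n : ℕ} (x : Fin n → Fin 2) : Set (Fin (n - 1) → Fin 2) :=
  {y | (∃ d ∈ Finset.Icc 1 n, y = delAt x d) ∨
       ∃ d ∈ Finset.Icc 1 n, ∃ e ∈ Finset.Icc 1 n, d ≠ e ∧ y = delSub x d e}

/-- The code `C_n(c0,c1,c2)`. -/
def codeC (n : ℕ) (c0 c1 c2 : ℕ) : Finset (Fin n → Fin 2) :=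
  Finset.univ.filter fun x =>
    x ≠ (fun _ => 0) ∧ x ≠ (fun _ => 1) ∧
    wt x % 4 = c0 ∧ vtSyn 1 x % (2 * n) = c1 ∧ vtSyn 2 x % (2 * n ^ 2) = c2

/-- `u_i = Σ_{ℓ=i}^n x_ℓ − Σ_{ℓ=i}^n x'_ℓ` (1-based positions, value in `ℤ`). -/
def uSeq {n : ℕ} (x x' : Fin n → Fin 2) (i : ℕ) : ℤ :=
  (∑ l ∈ Finset.Icc i n, ((getBit x l : ℕ) : ℤ)) -
    ∑ l ∈ Finset.Icc i n, ((getBit x' l : ℕ) : ℤ)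

/-!
Put `y = substAt x e1` and `y' = substAt x' e2`; they have the same deletion. Comparing suffix
sums term by term, `Σ_{ℓ ≥ i} (y_ℓ - y'_ℓ)` is `y_{d1} - y'_{d2}` for `i ≤ d1`, `y_i - y'_{d2}`
for `d1 < i ≤ d2` and `0` beyond `d2`; undoing the substitutions adds `2 x_{e1} - 1` for `i ≤ e1`
and subtracts `2 x'_{e2} - 1` for `i ≤ e2`. So `u` is an explicit piecewise expression in a few
bits. As `u_1 = wt x - wt x' ≡ 0 (mod 4)`, these bits satisfy `y_{d1} = y'_{d2}` and
`x_{e1} = x'_{e2}`; then the sign of `u` on `[1, λ₂ - 1]` is fixed by `x_{e1}`, on `[λ₂, n]` by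
`y'_{d2}`, and every piece has absolute value at most `2`.
-/

open Finset

def sufSum {n : ℕ} (x : Fin n → Fin 2) (i : ℕ) : ℤ :=
  ∑ l ∈ Icc i n, ((getBit x l : ℕ) : ℤ)

section

variable {n : ℕ}

theorem getBit_substAt (x : Fin n → Fin 2) {e k : ℕ} (hk : 1 ≤ k) (hkn : k ≤ n) :
    getBit (substAt x e) k = if k = e then 1 - getBit x k else getBit x k := by
  simp only [getBit, substAt, dif_pos (by omega : k - 1 < n), Nat.sub_add_cancel hk]

theorem val_one_sub_fin_two (v : Fin 2) : (((1 - v : Fin 2) : ℕ) : ℤ) = 1 - ((v : ℕ) : ℤ) := by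
  fin_cases v <;> rfl

theorem getBit_substAt_self (x : Fin n → Fin 2) {e : ℕ} (he : 1 ≤ e) (hen : e ≤ n) :
    ((getBit (substAt x e) e : ℕ) : ℤ) = 1 - ((getBit x e : ℕ) : ℤ) := by
  rw [getBit_substAt x he hen, if_pos rfl, val_one_sub_fin_two]

theorem sufSum_succ (x : Fin n → Fin 2) {i : ℕ} (hi : i ≤ n) :
    sufSum x i = ((getBit x i : ℕ) : ℤ) + sufSum x (i + 1) := by
  rw [sufSum, ← insert_Icc_add_one_left_eq_Icc hi, sum_insert (by simp), sufSum]

theorem sufSum_of_lt (x : Fin n → Fin 2) {i : ℕ} (hi : n < i) : sufSum x i = 0 := by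
  rw [sufSum, Icc_eq_empty (by omega), sum_empty]

theorem sufSum_one (x : Fin n → Fin 2) : sufSum x 1 = wt x := by
  have h := sum_Ico_add' (fun l => ((getBit x l : ℕ) : ℤ)) 0 n 1
  rw [zero_add, Ico_add_one_right_eq_Icc, ← range_eq_Ico, ← Fin.sum_univ_eq_sum_range] at h
  rw [sufSum, ← h, wt]
  push_cast
  refine sum_congr rfl fun i _ => ?_
  simp [getBit]

-- `1 ≤ i` matters: position `0` is junk, with `getBit x 0 = getBit x 1`.
theorem sufSum_substAt (x : Fin n → Fin 2) {e i : ℕ} (hen : e ≤ n) (hi : 1 ≤ i) :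
    sufSum (substAt x e) i =
      sufSum x i + if i ≤ e then 1 - 2 * ((getBit x e : ℕ) : ℤ) else 0 := by
  calc sufSum (substAt x e) i
      = ∑ l ∈ Icc i n, (((getBit x l : ℕ) : ℤ) +
          if l = e then 1 - 2 * ((getBit x l : ℕ) : ℤ) else 0) := by
        refine sum_congr rfl fun l hl => ?_
        rw [mem_Icc] at hl
        rw [getBit_substAt x (by omega) hl.2]
        split_ifs
        · rw [val_one_sub_fin_two]; ring
        · ring
    _ = _ := by
        rw [sum_add_distrib, sum_ite_eq', sufSum]
        simp only [mem_Icc, hen, and_true]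

theorem uSeq_eq_sufSum_sub (x x' : Fin n → Fin 2) (i : ℕ) :
    uSeq x x' i = sufSum x i - sufSum x' i := rfl

theorem getBit_of_delAt_eq {y y' : Fin n → Fin 2} {d d' : ℕ} (h : delAt y d = delAt y' d')
    {j : ℕ} (hj : 1 ≤ j) (hjn : j < n) :
    (if j < d then getBit y j else getBit y (j + 1)) =
      if j < d' then getBit y' j else getBit y' (j + 1) := by
  have hj' := congrFun h ⟨j - 1, by omega⟩
  simp only [delAt, Nat.sub_add_cancel hj, show j - 1 + 2 = j + 1 by omega] at hj'
  exact hj'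

theorem uSeq_of_delAt_eq {y y' : Fin n → Fin 2} {d d' : ℕ} (h : delAt y d = delAt y' d')
    (hd : 1 ≤ d) (hdd' : d ≤ d') (hd' : d' ≤ n) {i : ℕ} (hi : 1 ≤ i) :
    uSeq y y' i =
      (if i ≤ d then ((getBit y d : ℕ) : ℤ) else if i ≤ d' then ((getBit y i : ℕ) : ℤ) else 0) -
        if i ≤ d' then ((getBit y' d' : ℕ) : ℤ) else 0 := by
  have key : ∀ j, 1 ≤ j → j < n →
      (if j < d then ((getBit y j : ℕ) : ℤ) else ((getBit y (j + 1) : ℕ) : ℤ)) =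
        if j < d' then ((getBit y' j : ℕ) : ℤ) else ((getBit y' (j + 1) : ℕ) : ℤ) :=
    fun j hj hjn => by
      simpa only [apply_ite (fun v : Fin 2 => ((v : ℕ) : ℤ))] using
        congrArg (fun v : Fin 2 => ((v : ℕ) : ℤ)) (getBit_of_delAt_eq h hj hjn)
  induction hk : n + 1 - i generalizing i with
  | zero =>
    rw [uSeq_eq_sufSum_sub, sufSum_of_lt y (by omega), sufSum_of_lt y' (by omega)]
    split_ifs <;> omega
  | succ k ih =>
    have hin : i ≤ n := by omega
    rw [uSeq_eq_sufSum_sub, sufSum_succ y hin, sufSum_succ y' hin, add_sub_add_comm,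
      ← uSeq_eq_sufSum_sub, ih (by omega) (by omega)]
    rcases lt_trichotomy i d' with hid' | rfl | hid'
    · have := key i hi (by omega)
      rcases eq_or_ne i d with rfl | hid <;> split_ifs at this ⊢ <;> omega
    · rcases eq_or_ne i d with rfl | hid <;> split_ifs <;> omega
    · obtain ⟨j, rfl⟩ : ∃ j, i = j + 1 := ⟨i - 1, by omega⟩
      have := key j (by omega) (by omega)
      split_ifs at this ⊢ <;> omega

theorem uSeq_of_delSub_eq {x x' : Fin n → Fin 2} {d1 e1 d2 e2 : ℕ}
    (h : delSub x d1 e1 = delSub x' d2 e2) (hd1 : 1 ≤ d1) (hd : d1 ≤ d2) (hd2 : d2 ≤ n)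
    (he1 : e1 ≤ n) (he2 : e2 ≤ n) {i : ℕ} (hi : 1 ≤ i) :
    uSeq x x' i =
      (if i ≤ d1 then ((getBit (substAt x e1) d1 : ℕ) : ℤ)
        else if i ≤ d2 then ((getBit (substAt x e1) i : ℕ) : ℤ) else 0) -
      (if i ≤ d2 then ((getBit (substAt x' e2) d2 : ℕ) : ℤ) else 0) +
      (if i ≤ e1 then 2 * ((getBit x e1 : ℕ) : ℤ) - 1 else 0) -
      (if i ≤ e2 then 2 * ((getBit x' e2 : ℕ) : ℤ) - 1 else 0) := by
  have hdel := uSeq_of_delAt_eq h hd1 hd hd2 hi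
  rw [uSeq_eq_sufSum_sub, sufSum_substAt x he1 hi, sufSum_substAt x' he2 hi] at hdel
  rw [uSeq_eq_sufSum_sub]
  split_ifs at hdel ⊢ <;> linarith

theorem getBit_eq_of_delSub_eq_of_wt_modEq {x x' : Fin n → Fin 2} {d1 e1 d2 e2 : ℕ}
    (h : delSub x d1 e1 = delSub x' d2 e2) (hwt : wt x ≡ wt x' [MOD 4])
    (hd1 : 1 ≤ d1) (hd : d1 ≤ d2) (hd2 : d2 ≤ n)
    (he1 : 1 ≤ e1) (he1n : e1 ≤ n) (he2 : 1 ≤ e2) (he2n : e2 ≤ n) :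
    ((getBit (substAt x e1) d1 : ℕ) : ℤ) = getBit (substAt x' e2) d2 ∧
      ((getBit x e1 : ℕ) : ℤ) = getBit x' e2 := by
  have h4 : (4 : ℤ) ∣ uSeq x x' 1 := by
    rw [uSeq_eq_sufSum_sub, sufSum_one, sufSum_one]
    exact Nat.modEq_iff_dvd.mp hwt.symm
  rw [uSeq_of_delSub_eq h hd1 hd hd2 he1n he2n le_rfl, if_pos hd1, if_pos (by omega),
    if_pos he1, if_pos he2] at h4
  omega

end

theorem stmt16_general (n : ℕ) (x x' : Fin n → Fin 2)
    (hwt : wt x ≡ wt x' [MOD 4])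
    (d1 e1 d2 e2 lam2 : ℕ)
    (hd1 : d1 ∈ Finset.Icc 1 n) (he1 : e1 ∈ Finset.Icc 1 n)
    (hd2 : d2 ∈ Finset.Icc 1 n) (he2 : e2 ∈ Finset.Icc 1 n)
    (hE : delSub x d1 e1 = delSub x' d2 e2)
    (hcase : (e1 < d1 ∧ d1 ≤ e2 ∧ e2 < d2 ∧ lam2 = e2 + 1) ∨
             (e2 < d1 ∧ d1 < e1 ∧ e1 ≤ d2 ∧ lam2 = e1)) :
    ((∀ i ∈ Finset.Icc 1 (lam2 - 1), 0 ≤ uSeq x x' i) ∨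
      (∀ i ∈ Finset.Icc 1 (lam2 - 1), uSeq x x' i ≤ 0)) ∧
    ((∀ i ∈ Finset.Icc lam2 n, 0 ≤ uSeq x x' i) ∨
      (∀ i ∈ Finset.Icc lam2 n, uSeq x x' i ≤ 0)) ∧
    (∀ i ∈ Finset.Icc 1 n, |uSeq x x' i| ≤ 2) := by
  simp only [mem_Icc] at hd1 he1 hd2 he2
  have hu i (hi : 1 ≤ i) := uSeq_of_delSub_eq hE hd1.1 (by omega) hd2.2 he1.2 he2.2 hi
  have hflip i (hi : i = e1) :
      ((getBit (substAt x e1) i : ℕ) : ℤ) = 1 - ((getBit x e1 : ℕ) : ℤ) := by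
    subst hi
    exact getBit_substAt_self x he1.1 he1.2
  obtain ⟨hyd, hxe⟩ := getBit_eq_of_delSub_eq_of_wt_modEq hE hwt hd1.1 (by omega) hd2.2
    he1.1 he1.2 he2.1 he2.2
  have hc : ((getBit x e1 : ℕ) : ℤ) = 0 ∨ ((getBit x e1 : ℕ) : ℤ) = 1 := by omega
  have hc' : ((getBit (substAt x' e2) d2 : ℕ) : ℤ) = 0 ∨
      ((getBit (substAt x' e2) d2 : ℕ) : ℤ) = 1 := by omega
  refine ⟨?_, ?_, fun i hi => ?_⟩
  · rcases hcase with ⟨h₁, h₂, h₃, rfl⟩ | ⟨h₁, h₂, h₃, rfl⟩ <;> rcases hc with hc | hc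
    · left; intro i hi; rw [mem_Icc] at hi; have hui := hu i hi.1; split_ifs at hui <;> omega
    · right; intro i hi; rw [mem_Icc] at hi; have hui := hu i hi.1; split_ifs at hui <;> omega
    · right; intro i hi; rw [mem_Icc] at hi; have hui := hu i hi.1; split_ifs at hui <;> omega
    · left; intro i hi; rw [mem_Icc] at hi; have hui := hu i hi.1; split_ifs at hui <;> omega
  · rcases hc' with hc' | hc'
    · left; intro i hi; rw [mem_Icc] at hi; have hui := hu i (by omega); have := hflip i
      split_ifs at hui <;> omega
    · right; intro i hi; rw [mem_Icc] at hi; have hui := hu i (by omega); have := hflip i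
      split_ifs at hui <;> omega
  · rw [mem_Icc] at hi
    have hui := hu i hi.1
    have := hflip i
    rw [abs_le]
    split_ifs at hui <;> omega

/-- Claim 2, Case (ii): with `λ₂ = e2 + 1` (if `e1 < d1 ≤ e2 < d2`)
or `λ₂ = e1` (if `e2 < d1 < e1 ≤ d2`), the sequence `u` is sign-constant on
`[1,λ₂−1]` and on `[λ₂,n]`, and `|u_i| ≤ 2` everywhere. -/
theorem stmt16 (n : ℕ) (hn : 2 ≤ n) (x x' : Fin n → Fin 2)
    (hwt : wt x ≡ wt x' [MOD 4])
    (d1 e1 d2 e2 lam2 : ℕ)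
    (hd1 : d1 ∈ Finset.Icc 1 n) (he1 : e1 ∈ Finset.Icc 1 n)
    (hd2 : d2 ∈ Finset.Icc 1 n) (he2 : e2 ∈ Finset.Icc 1 n)
    (h1 : d1 ≠ e1) (h2 : d2 ≠ e2)
    (hE : delSub x d1 e1 = delSub x' d2 e2)
    (hcase : (e1 < d1 ∧ d1 ≤ e2 ∧ e2 < d2 ∧ lam2 = e2 + 1) ∨
             (e2 < d1 ∧ d1 < e1 ∧ e1 ≤ d2 ∧ lam2 = e1)) :
    ((∀ i ∈ Finset.Icc 1 (lam2 - 1), 0 ≤ uSeq x x' i) ∨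
      (∀ i ∈ Finset.Icc 1 (lam2 - 1), uSeq x x' i ≤ 0)) ∧
    ((∀ i ∈ Finset.Icc lam2 n, 0 ≤ uSeq x x' i) ∨
      (∀ i ∈ Finset.Icc lam2 n, uSeq x x' i ≤ 0)) ∧
    (∀ i ∈ Finset.Icc 1 n, |uSeq x x' i| ≤ 2) :=
  stmt16_general n x x' hwt d1 e1 d2 e2 lam2 hd1 he1 hd2 he2 hE hcase
end

section
/- Let n ≥ 2 and let x, x' ∈ {0,1}^n satisfy wt(x) ≡ wt(x') (mod 4). Suppose d_1, e_1, d_2, e_2 ∈ {1,…,n} with d_1 ≠ e_1, d_2 ≠ e_2, E(x, d_1, e_1) = E(x', d_2, e_2), and either e_1 < d_1 ≤ d_2 < e_2 or e_2 < d_1 ≤ d_2 < e_1. Let u_i = Σ_{ℓ=i}^n x_ℓ − Σ_{ℓ=i}^n x'_ℓ. Then either u_i ≥ 0 for all i ∈ {1,…,n} or u_i ≤ 0 for all i ∈ {1,…,n}, and |u_i| ≤ 2 for all i ∈ {1,…,n}. -/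
lemma fin2sub : ∀ v : Fin 2, ((1 - v : Fin 2) : ℕ) + (v : ℕ) = 1 := by decide

lemma getBit_le_one {n : ℕ} (x : Fin n → Fin 2) (p : ℕ) : (getBit x p : ℕ) ≤ 1 :=
  Nat.lt_succ_iff.mp (getBit x p).isLt

lemma substAt_getBit {n : ℕ} (x : Fin n → Fin 2) (e p : ℕ) (h1 : 1 ≤ p) (h2 : p ≤ n) :
    getBit (substAt x e) p = if p = e then 1 - getBit x p else getBit x p := by
  have hp : p - 1 < n := by omega
  have hpe : p - 1 + 1 = p := by omega
  simp only [getBit, substAt, dif_pos hp, hpe]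

lemma uSeq_rec {n : ℕ} (x x' : Fin n → Fin 2) (i : ℕ) (h2 : i ≤ n) :
    uSeq x x' i = uSeq x x' (i + 1) + ((getBit x i : ℕ) : ℤ) - ((getBit x' i : ℕ) : ℤ) := by
  unfold uSeq
  have h : Finset.Icc i n = insert i (Finset.Icc (i+1) n) := by
    ext a; simp [Finset.mem_Icc]; omega
  rw [h, Finset.sum_insert (by simp), Finset.sum_insert (by simp)]
  ring

lemma uSeq_top {n : ℕ} (x x' : Fin n → Fin 2) (i : ℕ) (h : n < i) : uSeq x x' i = 0 := by
  unfold uSeq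
  rw [Finset.Icc_eq_empty (by omega)]
  simp

lemma sum_getBit {n : ℕ} (x : Fin n → Fin 2) :
    ∑ l ∈ Finset.Icc 1 n, ((getBit x l : ℕ) : ℤ) = (wt x : ℤ) := by
  have h1 : (wt x : ℤ) = ∑ i : Fin n, ((x i : ℕ) : ℤ) := by
    unfold wt; push_cast; rfl
  rw [h1]
  have h2 := Fin.sum_univ_eq_sum_range (fun j => ((getBit x (j + 1) : ℕ) : ℤ)) n
  rw [show Finset.Icc 1 n = Finset.Ico 1 (n+1) by rw [Finset.Ico_add_one_right_eq_Icc],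
    Finset.sum_Ico_eq_sum_range]
  simp only [Nat.add_sub_cancel, add_comm 1]
  rw [← h2]
  apply Finset.sum_congr rfl
  intro i _
  simp [getBit, i.isLt]

lemma point {n : ℕ} (x x' : Fin n → Fin 2) (d1 e1 d2 e2 : ℕ)
    (hE : delSub x d1 e1 = delSub x' d2 e2) (J : ℕ) (h1 : 1 ≤ J) (h2 : J + 1 ≤ n) :
    (if (if J < d1 then J else J + 1) = e1 then 1 - getBit x (if J < d1 then J else J + 1)
      else getBit x (if J < d1 then J else J + 1)) =
    (if (if J < d2 then J else J + 1) = e2 then 1 - getBit x' (if J < d2 then J else J + 1)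
      else getBit x' (if J < d2 then J else J + 1)) := by
  have hj : J - 1 < n - 1 := by omega
  have h := congrFun hE ⟨J - 1, hj⟩
  simp only [delSub, delAt] at h
  rw [show J - 1 + 1 = J from by omega, show J - 1 + 2 = J + 1 from by omega] at h
  have key : ∀ (y : Fin n → Fin 2) (e d : ℕ),
      (if J < d then getBit (substAt y e) J else getBit (substAt y e) (J + 1)) =
      (if (if J < d then J else J + 1) = e then 1 - getBit y (if J < d then J else J + 1)
        else getBit y (if J < d then J else J + 1)) := by
    intro y e d
    by_cases hc : J < d <;>
      simp only [hc, if_true, if_false, ite_true, ite_false] <;>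
      [exact substAt_getBit y e J h1 (by omega); exact substAt_getBit y e (J+1) (by omega) h2]
  rw [key, key] at h
  exact h

lemma key {n : ℕ} (x x' : Fin n → Fin 2) (d1 d2 a b : ℕ)
    (ha : 1 ≤ a) (had : a < d1) (hdd : d1 ≤ d2) (hdb : d2 < b) (hbn : b ≤ n)
    (L1 : ∀ l, 1 ≤ l → l < d1 → l ≠ a → (getBit x' l : ℕ) = getBit x l)
    (L2 : (getBit x' a : ℕ) + getBit x a = 1)
    (L3 : ∀ l, d1 ≤ l → l < d2 → (getBit x' l : ℕ) = getBit x (l + 1))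
    (L4 : ∀ l, d2 < l → l ≤ n → l ≠ b → (getBit x' l : ℕ) = getBit x l)
    (L5 : (getBit x' b : ℕ) + getBit x b = 1)
    (hwt : wt x ≡ wt x' [MOD 4]) :
    ((∀ i ∈ Finset.Icc 1 n, 0 ≤ uSeq x x' i) ∨
      (∀ i ∈ Finset.Icc 1 n, uSeq x x' i ≤ 0)) ∧
    (∀ i ∈ Finset.Icc 1 n, |uSeq x x' i| ≤ 2) := by
  set Xb : ℤ := ((getBit x b : ℕ) : ℤ) with hXb
  set Xa : ℤ := ((getBit x a : ℕ) : ℤ) with hXa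
  set C : ℤ := ((getBit x d1 : ℕ) : ℤ) with hC
  set D : ℤ := ((getBit x' d2 : ℕ) : ℤ) with hD
  have hF : ∀ k i, i + k = n + 1 → 1 ≤ i → uSeq x x' i =
      (if b < i then 0 else if d2 < i then 2*Xb - 1
        else if d1 ≤ i then 2*Xb - 1 + ((getBit x i : ℕ) : ℤ) - D
        else if a < i then 2*Xb - 1 + C - D
        else (2*Xa - 1) + (2*Xb - 1) + C - D) := by
    intro k
    induction k with
    | zero =>
      intro i hik _
      have hi : i = n + 1 := by omega
      rw [if_pos (by omega), uSeq_top x x' i (by omega)]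
    | succ k IH =>
      intro i hik h1i
      have hin : i ≤ n := by omega
      rw [uSeq_rec x x' i hin, IH (i+1) (by omega) (by omega)]
      by_cases hc1 : b < i
      · rw [if_pos (show b < i + 1 by omega), if_pos hc1]
        have := L4 i (by omega) hin (by omega)
        omega
      · rw [if_neg hc1]
        by_cases hc2 : d2 < i
        · rw [if_pos hc2]
          rcases Nat.lt_or_ge i b with hib | hib
          · rw [if_neg (show ¬ b < i + 1 by omega), if_pos (show d2 < i + 1 by omega)]
            have := L4 i (by omega) hin (by omega)
            omega
          · have hieb : i = b := by omega
            subst hieb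
            rw [if_pos (show i < i + 1 by omega)]
            have h0 := getBit_le_one x i
            have h0' := getBit_le_one x' i
            omega
        · rw [if_neg hc2]
          by_cases hc3 : d1 ≤ i
          · rw [if_pos hc3, if_neg (show ¬ b < i + 1 by omega)]
            rcases Nat.lt_or_ge i d2 with hid | hid
            · rw [if_neg (show ¬ d2 < i + 1 by omega), if_pos (show d1 ≤ i + 1 by omega)]
              have := L3 i hc3 hid
              omega
            · have hid2 : i = d2 := by omega
              subst hid2
              rw [if_pos (show i < i + 1 by omega)]
          · rw [if_neg hc3, if_neg (show ¬ b < i + 1 by omega),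
              if_neg (show ¬ d2 < i + 1 by omega)]
            by_cases hc4 : a < i
            · rw [if_pos hc4]
              have hL := L1 i (by omega) (by omega) (by omega)
              by_cases hc5 : d1 ≤ i + 1
              · rw [if_pos hc5]
                have hid1 : i + 1 = d1 := by omega
                rw [hid1]
                omega
              · rw [if_neg hc5, if_pos (show a < i + 1 by omega)]
                omega
            · rw [if_neg hc4]
              rcases Nat.lt_or_ge i a with hia | hia
              · rw [if_neg (show ¬ d1 ≤ i + 1 by omega), if_neg (show ¬ a < i + 1 by omega)]
                have := L1 i (by omega) (by omega) (by omega)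
                omega
              · have hiea : i = a := by omega
                subst hiea
                by_cases hc5 : d1 ≤ i + 1
                · rw [if_pos hc5]
                  have hid1 : i + 1 = d1 := by omega
                  rw [hid1]
                  omega
                · rw [if_neg hc5, if_pos (show i < i + 1 by omega)]
                  omega
  have hu1 : uSeq x x' 1 = (2*Xa - 1) + (2*Xb - 1) + C - D := by
    rw [hF n 1 (by omega) le_rfl, if_neg (by omega), if_neg (by omega),
      if_neg (by omega), if_neg (by omega)]
  have hu1' : uSeq x x' 1 = (wt x : ℤ) - (wt x' : ℤ) := by
    unfold uSeq; rw [sum_getBit, sum_getBit]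
  have hmod : wt x % 4 = wt x' % 4 := hwt
  have hCb : C ≤ 1 ∧ 0 ≤ C := ⟨by simpa [hC] using (Nat.cast_le.mpr (getBit_le_one x d1) : (_:ℤ) ≤ 1), by positivity⟩
  have hDb : D ≤ 1 ∧ 0 ≤ D := ⟨by simpa [hD] using (Nat.cast_le.mpr (getBit_le_one x' d2) : (_:ℤ) ≤ 1), by positivity⟩
  have hAb := getBit_le_one x a
  have hBb := getBit_le_one x b
  have hzero : (2*Xa - 1) + (2*Xb - 1) + C - D = 0 := by omega
  constructor
  · rcases (show Xb = 0 ∨ Xb = 1 by omega) with hb0 | hb1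
    · right
      intro i hi
      simp only [Finset.mem_Icc] at hi
      rw [hF (n + 1 - i) i (by omega) hi.1]
      have hXi := getBit_le_one x i
      split_ifs <;> omega
    · left
      intro i hi
      simp only [Finset.mem_Icc] at hi
      rw [hF (n + 1 - i) i (by omega) hi.1]
      have hXi := getBit_le_one x i
      split_ifs <;> omega
  · intro i hi
    simp only [Finset.mem_Icc] at hi
    rw [hF (n + 1 - i) i (by omega) hi.1]
    have hXi := getBit_le_one x i
    rw [abs_le]
    constructor <;> [skip; skip] <;> split_ifs <;> omega

/-- Claim 3, Case (iii): the sequence `u` is sign-constant on the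
whole range `[1,n]`, and `|u_i| ≤ 2` everywhere. -/
theorem stmt17 (n : ℕ) (hn : 2 ≤ n) (x x' : Fin n → Fin 2)
    (hwt : wt x ≡ wt x' [MOD 4])
    (d1 e1 d2 e2 : ℕ)
    (hd1 : d1 ∈ Finset.Icc 1 n) (he1 : e1 ∈ Finset.Icc 1 n)
    (hd2 : d2 ∈ Finset.Icc 1 n) (he2 : e2 ∈ Finset.Icc 1 n)
    (h1 : d1 ≠ e1) (h2 : d2 ≠ e2)
    (hE : delSub x d1 e1 = delSub x' d2 e2)
    (hcase : (e1 < d1 ∧ d1 ≤ d2 ∧ d2 < e2) ∨ (e2 < d1 ∧ d1 ≤ d2 ∧ d2 < e1)) :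
    ((∀ i ∈ Finset.Icc 1 n, 0 ≤ uSeq x x' i) ∨
      (∀ i ∈ Finset.Icc 1 n, uSeq x x' i ≤ 0)) ∧
    (∀ i ∈ Finset.Icc 1 n, |uSeq x x' i| ≤ 2) := by
  simp only [Finset.mem_Icc] at hd1 he1 hd2 he2
  obtain ⟨hd1a, hd1b⟩ := hd1
  obtain ⟨he1a, he1b⟩ := he1
  obtain ⟨hd2a, hd2b⟩ := hd2
  obtain ⟨he2a, he2b⟩ := he2
  rcases hcase with ⟨hA1, hA2, hA3⟩ | ⟨hB1, hB2, hB3⟩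
  · -- case A : a = e1, b = e2
    apply key x x' d1 d2 e1 e2 he1a hA1 hA2 hA3 he2b _ _ _ _ _ hwt
    · -- L1
      intro l hl1 hl2 hl3
      have h := point x x' d1 e1 d2 e2 hE l hl1 (by omega)
      rw [if_pos (show l < d1 by omega), if_pos (show l < d2 by omega),
        if_neg hl3, if_neg (show l ≠ e2 by omega)] at h
      exact congrArg Fin.val h.symm
    · -- L2
      have h := point x x' d1 e1 d2 e2 hE e1 he1a (by omega)
      rw [if_pos (show e1 < d1 by omega), if_pos (show e1 < d2 by omega),
        if_pos rfl, if_neg (show e1 ≠ e2 by omega)] at h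
      rw [← h]
      exact fin2sub (getBit x e1)
    · -- L3
      intro l hl1 hl2
      have h := point x x' d1 e1 d2 e2 hE l (by omega) (by omega)
      rw [if_neg (show ¬ l < d1 by omega), if_pos (show l < d2 by omega),
        if_neg (show l + 1 ≠ e1 by omega), if_neg (show l ≠ e2 by omega)] at h
      exact congrArg Fin.val h.symm
    · -- L4
      intro l hl1 hl2 hl3
      have h := point x x' d1 e1 d2 e2 hE (l - 1) (by omega) (by omega)
      rw [if_neg (show ¬ l - 1 < d1 by omega), if_neg (show ¬ l - 1 < d2 by omega),
        show l - 1 + 1 = l from by omega,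
        if_neg (show l ≠ e1 by omega), if_neg hl3] at h
      exact congrArg Fin.val h.symm
    · -- L5
      have h := point x x' d1 e1 d2 e2 hE (e2 - 1) (by omega) (by omega)
      rw [if_neg (show ¬ e2 - 1 < d1 by omega), if_neg (show ¬ e2 - 1 < d2 by omega),
        show e2 - 1 + 1 = e2 from by omega,
        if_neg (show e2 ≠ e1 by omega), if_pos rfl] at h
      rw [h]
      have := fin2sub (getBit x' e2)
      omega
  · -- case B : a = e2, b = e1
    apply key x x' d1 d2 e2 e1 he2a hB1 hB2 hB3 he1b _ _ _ _ _ hwt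
    · -- L1
      intro l hl1 hl2 hl3
      have h := point x x' d1 e1 d2 e2 hE l hl1 (by omega)
      rw [if_pos (show l < d1 by omega), if_pos (show l < d2 by omega),
        if_neg (show l ≠ e1 by omega), if_neg hl3] at h
      exact congrArg Fin.val h.symm
    · -- L2
      have h := point x x' d1 e1 d2 e2 hE e2 he2a (by omega)
      rw [if_pos (show e2 < d1 by omega), if_pos (show e2 < d2 by omega),
        if_neg (show e2 ≠ e1 by omega), if_pos rfl] at h
      rw [h]
      have := fin2sub (getBit x' e2)
      omega
    · -- L3
      intro l hl1 hl2
      have h := point x x' d1 e1 d2 e2 hE l (by omega) (by omega)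
      rw [if_neg (show ¬ l < d1 by omega), if_pos (show l < d2 by omega),
        if_neg (show l + 1 ≠ e1 by omega), if_neg (show l ≠ e2 by omega)] at h
      exact congrArg Fin.val h.symm
    · -- L4
      intro l hl1 hl2 hl3
      have h := point x x' d1 e1 d2 e2 hE (l - 1) (by omega) (by omega)
      rw [if_neg (show ¬ l - 1 < d1 by omega), if_neg (show ¬ l - 1 < d2 by omega),
        show l - 1 + 1 = l from by omega,
        if_neg hl3, if_neg (show l ≠ e2 by omega)] at h
      exact congrArg Fin.val h.symm
    · -- L5
      have h := point x x' d1 e1 d2 e2 hE (e1 - 1) (by omega) (by omega)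
      rw [if_neg (show ¬ e1 - 1 < d1 by omega), if_neg (show ¬ e1 - 1 < d2 by omega),
        show e1 - 1 + 1 = e1 from by omega,
        if_pos rfl, if_neg (show e1 ≠ e2 by omega)] at h
      rw [← h]
      exact fin2sub (getBit x e1)
end

section
/- Let n ≥ 2 and let x, x' ∈ {0,1}^n satisfy wt(x) ≡ wt(x') (mod 4). Suppose d_1, e_1, d_2, e_2 ∈ {1,…,n} with d_1 ≠ e_1, d_2 ≠ e_2, E(x, d_1, e_1) = E(x', d_2, e_2), d_1 ≤ d_2 < e_1, d_2 < e_2, and e_1 ≠ e_2. Let u_i = Σ_{ℓ=i}^n x_ℓ − Σ_{ℓ=i}^n x'_ℓ. Then: either u_i ≥ 0 for all i ∈ [1, d_2] or u_i ≤ 0 for all i ∈ [1, d_2]; either u_i ≥ 0 for all i ∈ [d_2+1, n] or u_i ≤ 0 for all i ∈ [d_2+1, n]; and |u_i| ≤ 1 for all i ∈ {1,…,n}. -/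
/-!
Flip bit `e₁` of `x` and bit `e₂` of `x'` to get `y` and `y'`. Deleting `d₁` from `y` and `d₂`
from `y'` gives the same word, so the suffix sums of `y` and `y'` agree beyond `d₂`, differ by
`y_i - y'_{d₂}` on `[d₁, d₂]` and by `y_{d₁} - y'_{d₂}` below `d₁`; each flip shifts the suffix
sums up to its position by `±1`. At `i = 1` this writes `u₁ = wt x - wt x'`, a multiple of `4`,
as a `±1` term plus a `±2` term, so both vanish: `y_{d₁} = y'_{d₂}` and `x_{e₁} = x'_{e₂}`.
Hence `u` takes values in `{0, 1 - 2 y'_{d₂}}` on `[1, d₂]`, while beyond `d₂` it is the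
difference of two step functions of the same height `1 - 2 x_{e₁}`.
-/

open Finset

section Deletion

variable {α M : Type*} [AddCommMonoid M]

def deleteAt (f : ℕ → α) (d j : ℕ) : α := if j < d then f j else f (j + 1)

lemma sum_Icc_succ_eq_sum_deleteAt (f : ℕ → M) {d i n : ℕ} (hdi : d ≤ i) :
    ∑ l ∈ Icc (i + 1) (n + 1), f l = ∑ l ∈ Icc i n, deleteAt f d l := by
  rw [← map_add_right_Icc, sum_map]
  exact sum_congr rfl fun l hl => by
    simp [deleteAt, not_lt.mpr (hdi.trans (mem_Icc.mp hl).1)]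

lemma sum_Icc_eq_add_sum_deleteAt (f : ℕ → M) {i d n : ℕ} (hid : i ≤ d) (hdn : d ≤ n + 1) :
    ∑ l ∈ Icc i (n + 1), f l = f d + ∑ l ∈ Icc i n, deleteAt f d l := by
  have hfront : ∑ l ∈ Ico i d, deleteAt f d l = ∑ l ∈ Ico i d, f l :=
    sum_congr rfl fun l hl => if_pos (mem_Ico.mp hl).2
  rw [← Ico_add_one_right_eq_Icc, ← Ico_add_one_right_eq_Icc, ← sum_Ico_consecutive _ hid hdn,
    hfront, ← sum_Ico_consecutive _ hid (by omega : d ≤ n + 1 + 1),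
    sum_eq_sum_Ico_succ_bot (by omega : d < n + 1 + 1), Ico_add_one_right_eq_Icc,
    Ico_add_one_right_eq_Icc, sum_Icc_succ_eq_sum_deleteAt f le_rfl]
  abel

section Aligned

variable {G : Type*} [AddCommGroup G] {f g : ℕ → G} {d₁ d₂ n i : ℕ}

lemma sum_Icc_deleteAt_eq (hfg : ∀ j ∈ Icc 1 n, deleteAt f d₁ j = deleteAt g d₂ j)
    (hi : 1 ≤ i) : ∑ l ∈ Icc i n, deleteAt f d₁ l = ∑ l ∈ Icc i n, deleteAt g d₂ l :=
  sum_congr rfl fun l hl => hfg l (Icc_subset_Icc_left hi hl)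

lemma sum_Icc_eq_of_deleteAt_eq_of_lt (hfg : ∀ j ∈ Icc 1 n, deleteAt f d₁ j = deleteAt g d₂ j)
    (hd₁ : d₁ < i) (hd₂ : d₂ < i) (hi : 1 < i) :
    ∑ l ∈ Icc i (n + 1), f l = ∑ l ∈ Icc i (n + 1), g l := by
  obtain ⟨k, rfl⟩ : ∃ k, i = k + 1 := ⟨i - 1, by omega⟩
  rw [sum_Icc_succ_eq_sum_deleteAt f (by omega : d₁ ≤ k),
    sum_Icc_succ_eq_sum_deleteAt g (by omega : d₂ ≤ k), sum_Icc_deleteAt_eq hfg (by omega)]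

lemma sum_Icc_sub_eq_of_deleteAt_eq_of_lt_of_le
    (hfg : ∀ j ∈ Icc 1 n, deleteAt f d₁ j = deleteAt g d₂ j)
    (hd₁ : d₁ < i) (hd₂ : i ≤ d₂) (hd₂n : d₂ ≤ n + 1) :
    ∑ l ∈ Icc i (n + 1), f l - ∑ l ∈ Icc i (n + 1), g l = f i - g d₂ := by
  obtain ⟨k, rfl⟩ : ∃ k, i = k + 1 := ⟨i - 1, by omega⟩
  have hf : deleteAt f d₁ k = f (k + 1) := if_neg (by omega)
  rw [sum_Icc_succ_eq_sum_deleteAt f (by omega : d₁ ≤ k),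
    ← add_sum_Ioc_eq_sum_Icc (by omega : k ≤ n), ← Icc_add_one_left_eq_Ioc, hf,
    sum_Icc_eq_add_sum_deleteAt g hd₂ hd₂n, sum_Icc_deleteAt_eq hfg (by omega)]
  abel

lemma sum_Icc_sub_eq_of_deleteAt_eq_of_le
    (hfg : ∀ j ∈ Icc 1 n, deleteAt f d₁ j = deleteAt g d₂ j)
    (hi : 1 ≤ i) (hid₁ : i ≤ d₁) (hd : d₁ ≤ d₂) (hd₂n : d₂ ≤ n + 1) :
    ∑ l ∈ Icc i (n + 1), f l - ∑ l ∈ Icc i (n + 1), g l = f d₁ - g d₂ := by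
  rw [sum_Icc_eq_add_sum_deleteAt f hid₁ (hd.trans hd₂n),
    sum_Icc_eq_add_sum_deleteAt g (hid₁.trans hd) hd₂n, sum_Icc_deleteAt_eq hfg hi]
  abel

end Aligned

end Deletion

section Bits

variable {n : ℕ} (x : Fin n → Fin 2)

def bitVal (p : ℕ) : ℤ := ((getBit x p : ℕ) : ℤ)

lemma bitVal_eq_zero_or_one (p : ℕ) : bitVal x p = 0 ∨ bitVal x p = 1 := by
  have := (getBit x p).isLt
  unfold bitVal
  omega

lemma bitVal_substAt (e : ℕ) {p : ℕ} (hp : 1 ≤ p) (hpn : p ≤ n) :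
    bitVal (substAt x e) p = if p = e then 1 - bitVal x p else bitVal x p := by
  have hlt : p - 1 < n := by omega
  simp only [bitVal, getBit, substAt, dif_pos hlt, Nat.sub_add_cancel hp]
  split_ifs
  · generalize x ⟨p - 1, hlt⟩ = b
    fin_cases b <;> rfl
  · rfl

lemma sum_Icc_bitVal_substAt {e i : ℕ} (he : e ≤ n) (hi : 1 ≤ i) :
    ∑ l ∈ Icc i n, bitVal (substAt x e) l =
      ∑ l ∈ Icc i n, bitVal x l + if i ≤ e then 1 - 2 * bitVal x e else 0 := by
  have hflip : ∀ l ∈ Icc i n, bitVal (substAt x e) l =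
      bitVal x l + if l = e then 1 - 2 * bitVal x e else 0 := by
    intro l hl
    rw [mem_Icc] at hl
    rw [bitVal_substAt x e (by omega) hl.2]
    split_ifs with hle
    · subst hle; ring
    · ring
  rw [sum_congr rfl hflip, sum_add_distrib, sum_ite_eq']
  simp [he]

lemma sum_Icc_one_bitVal : ∑ l ∈ Icc 1 n, bitVal x l = wt x := by
  rw [← Ico_add_one_right_eq_Icc, sum_Ico_eq_sum_range, Nat.add_sub_cancel,
    ← Fin.sum_univ_eq_sum_range, wt]
  push_cast
  exact sum_congr rfl fun i _ => by simp [bitVal, getBit]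

lemma bitVal_delAt (d : ℕ) {j : ℕ} (hj : 1 ≤ j) (hjn : j + 1 ≤ n) :
    bitVal (delAt x d) j = deleteAt (bitVal x) d j := by
  have hlt : j - 1 < n - 1 := by omega
  rw [bitVal, getBit, dif_pos hlt]
  simp only [delAt, deleteAt, bitVal, Nat.sub_add_cancel hj, show j - 1 + 2 = j + 1 by omega]
  split_ifs <;> rfl

lemma uSeq_eq_sum_bitVal (x' : Fin n → Fin 2) (i : ℕ) :
    uSeq x x' i = ∑ l ∈ Icc i n, bitVal x l - ∑ l ∈ Icc i n, bitVal x' l := rfl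

lemma uSeq_eq_sum_bitVal_substAt (x' : Fin n → Fin 2) {e₁ e₂ i : ℕ} (he₁ : e₁ ≤ n)
    (he₂ : e₂ ≤ n) (hi : 1 ≤ i) :
    uSeq x x' i =
      (∑ l ∈ Icc i n, bitVal (substAt x e₁) l - ∑ l ∈ Icc i n, bitVal (substAt x' e₂) l)
        - (if i ≤ e₁ then 1 - 2 * bitVal x e₁ else 0)
        + (if i ≤ e₂ then 1 - 2 * bitVal x' e₂ else 0) := by
  rw [uSeq_eq_sum_bitVal, sum_Icc_bitVal_substAt x he₁ hi, sum_Icc_bitVal_substAt x' he₂ hi]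
  ring

end Bits

lemma sign_const_of_eq_zero_or_eq {ι : Type*} {s : Finset ι} {u : ι → ℤ} {c : ℤ} (hc : |c| ≤ 1)
    (hu : ∀ i ∈ s, u i = 0 ∨ u i = c) :
    ((∀ i ∈ s, 0 ≤ u i) ∨ ∀ i ∈ s, u i ≤ 0) ∧ ∀ i ∈ s, |u i| ≤ 1 := by
  refine ⟨?_, fun i hi => ?_⟩
  · rcases le_total 0 c with hc₀ | hc₀
    · exact .inl fun i hi => by rcases hu i hi with h | h <;> rw [h]; exact hc₀
    · exact .inr fun i hi => by rcases hu i hi with h | h <;> rw [h]; exact hc₀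
  · rcases hu i hi with h | h <;> rw [h]
    · simp
    · exact hc

section Collision

variable {m : ℕ} {x x' : Fin (m + 1) → Fin 2} {d₁ e₁ d₂ e₂ : ℕ}

lemma deleteAt_bitVal_substAt_eq_of_delSub_eq (hE : delSub x d₁ e₁ = delSub x' d₂ e₂) :
    ∀ j ∈ Icc 1 m,
      deleteAt (bitVal (substAt x e₁)) d₁ j = deleteAt (bitVal (substAt x' e₂)) d₂ j := by
  intro j hj
  rw [mem_Icc] at hj
  rw [← bitVal_delAt _ _ hj.1 (by omega), ← bitVal_delAt _ _ hj.1 (by omega)]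
  exact congrArg (bitVal · j) hE

lemma uSeq_eq_of_le_of_delSub_eq (hE : delSub x d₁ e₁ = delSub x' d₂ e₂) (hd : d₁ ≤ d₂)
    (hde₁ : d₂ < e₁) (hde₂ : d₂ < e₂) (he₁ : e₁ ≤ m + 1) (he₂ : e₂ ≤ m + 1)
    {i : ℕ} (hi : 1 ≤ i) (hid₂ : i ≤ d₂) :
    uSeq x x' i =
      (if i ≤ d₁ then bitVal (substAt x e₁) d₁ else bitVal (substAt x e₁) i)
        - bitVal (substAt x' e₂) d₂ - (1 - 2 * bitVal x e₁) + (1 - 2 * bitVal x' e₂) := by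
  have hfg := deleteAt_bitVal_substAt_eq_of_delSub_eq hE
  rw [uSeq_eq_sum_bitVal_substAt x x' he₁ he₂ hi, if_pos (by omega), if_pos (by omega)]
  split_ifs with hid₁
  · rw [sum_Icc_sub_eq_of_deleteAt_eq_of_le hfg hi hid₁ hd (by omega)]
  · rw [sum_Icc_sub_eq_of_deleteAt_eq_of_lt_of_le hfg (by omega) hid₂ (by omega)]

lemma uSeq_eq_of_lt_of_delSub_eq (hE : delSub x d₁ e₁ = delSub x' d₂ e₂) (hd : d₁ ≤ d₂)
    (hd₂ : 1 ≤ d₂) (he₁ : e₁ ≤ m + 1) (he₂ : e₂ ≤ m + 1) {i : ℕ} (hi : d₂ < i) :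
    uSeq x x' i =
      (if i ≤ e₂ then 1 - 2 * bitVal x' e₂ else 0)
        - (if i ≤ e₁ then 1 - 2 * bitVal x e₁ else 0) := by
  rw [uSeq_eq_sum_bitVal_substAt x x' he₁ he₂ (by omega),
    sum_Icc_eq_of_deleteAt_eq_of_lt (deleteAt_bitVal_substAt_eq_of_delSub_eq hE)
      (by omega) hi (by omega)]
  ring

lemma bitVal_eq_of_delSub_eq_of_wt_modEq (hwt : wt x ≡ wt x' [MOD 4])
    (hE : delSub x d₁ e₁ = delSub x' d₂ e₂) (hd₁ : 1 ≤ d₁) (hd : d₁ ≤ d₂)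
    (hde₁ : d₂ < e₁) (hde₂ : d₂ < e₂) (he₁ : e₁ ≤ m + 1) (he₂ : e₂ ≤ m + 1) :
    bitVal (substAt x e₁) d₁ = bitVal (substAt x' e₂) d₂ ∧ bitVal x e₁ = bitVal x' e₂ := by
  have hu := uSeq_eq_of_le_of_delSub_eq hE hd hde₁ hde₂ he₁ he₂ le_rfl (hd₁.trans hd)
  rw [if_pos hd₁, uSeq_eq_sum_bitVal, sum_Icc_one_bitVal, sum_Icc_one_bitVal] at hu
  have h4 : (4 : ℤ) ∣ wt x' - wt x := Nat.modEq_iff_dvd.mp hwt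
  have := bitVal_eq_zero_or_one (substAt x e₁) d₁
  have := bitVal_eq_zero_or_one (substAt x' e₂) d₂
  have := bitVal_eq_zero_or_one x e₁
  have := bitVal_eq_zero_or_one x' e₂
  omega

end Collision

theorem stmt19_general (n : ℕ) (x x' : Fin n → Fin 2)
    (hwt : wt x ≡ wt x' [MOD 4])
    (d1 e1 d2 e2 : ℕ)
    (hd1 : d1 ∈ Finset.Icc 1 n) (he1 : e1 ∈ Finset.Icc 1 n)
    (hd2 : d2 ∈ Finset.Icc 1 n) (he2 : e2 ∈ Finset.Icc 1 n)
    (hE : delSub x d1 e1 = delSub x' d2 e2)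
    (hcase : d1 ≤ d2 ∧ d2 < e1 ∧ d2 < e2 ∧ e1 ≠ e2) :
    ((∀ i ∈ Finset.Icc 1 d2, 0 ≤ uSeq x x' i) ∨
      (∀ i ∈ Finset.Icc 1 d2, uSeq x x' i ≤ 0)) ∧
    ((∀ i ∈ Finset.Icc (d2 + 1) n, 0 ≤ uSeq x x' i) ∨
      (∀ i ∈ Finset.Icc (d2 + 1) n, uSeq x x' i ≤ 0)) ∧
    (∀ i ∈ Finset.Icc 1 n, |uSeq x x' i| ≤ 1) := by
  rw [mem_Icc] at hd1 he1 hd2 he2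
  obtain ⟨hd, hde1, hde2, -⟩ := hcase
  obtain ⟨m, rfl⟩ : ∃ m, n = m + 1 := ⟨n - 1, by omega⟩
  obtain ⟨hdel, hsub⟩ :=
    bitVal_eq_of_delSub_eq_of_wt_modEq hwt hE hd1.1 hd hde1 hde2 he1.2 he2.2
  have hbit := bitVal_eq_zero_or_one (substAt x' e2) d2
  have hc := bitVal_eq_zero_or_one x e1
  have hlow : ∀ i ∈ Icc 1 d2,
      uSeq x x' i = 0 ∨ uSeq x x' i = 1 - 2 * bitVal (substAt x' e2) d2 := by
    intro i hi
    have := bitVal_eq_zero_or_one (substAt x e1) i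
    rw [mem_Icc] at hi
    rw [uSeq_eq_of_le_of_delSub_eq hE hd hde1 hde2 he1.2 he2.2 hi.1 hi.2]
    split_ifs <;> omega
  have hhigh : ∀ i ∈ Icc (d2 + 1) (m + 1), uSeq x x' i = 0 ∨
      uSeq x x' i = if e1 ≤ e2 then 1 - 2 * bitVal x e1 else 2 * bitVal x e1 - 1 := by
    intro i hi
    rw [uSeq_eq_of_lt_of_delSub_eq hE hd hd2.1 he1.2 he2.2 (mem_Icc.mp hi).1, hsub]
    split_ifs <;> omega
  obtain ⟨hlow_sign, hlow_abs⟩ :=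
    sign_const_of_eq_zero_or_eq (abs_le.mpr ⟨by omega, by omega⟩) hlow
  obtain ⟨hhigh_sign, hhigh_abs⟩ := sign_const_of_eq_zero_or_eq
    (by split_ifs <;> exact abs_le.mpr ⟨by omega, by omega⟩) hhigh
  refine ⟨hlow_sign, hhigh_sign, fun i hi => ?_⟩
  rw [mem_Icc] at hi
  rcases le_or_gt i d2 with hid | hid
  · exact hlow_abs i (mem_Icc.mpr ⟨hi.1, hid⟩)
  · exact hhigh_abs i (mem_Icc.mpr ⟨hid, hi.2⟩)

/-- Claim 5, Case (vi): the sequence `u` is sign-constant on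
`[1,d2]` and on `[d2+1,n]`, and `|u_i| ≤ 1` everywhere. -/
theorem stmt19 (n : ℕ) (hn : 2 ≤ n) (x x' : Fin n → Fin 2)
    (hwt : wt x ≡ wt x' [MOD 4])
    (d1 e1 d2 e2 : ℕ)
    (hd1 : d1 ∈ Finset.Icc 1 n) (he1 : e1 ∈ Finset.Icc 1 n)
    (hd2 : d2 ∈ Finset.Icc 1 n) (he2 : e2 ∈ Finset.Icc 1 n)
    (h1 : d1 ≠ e1) (h2 : d2 ≠ e2)
    (hE : delSub x d1 e1 = delSub x' d2 e2)
    (hcase : d1 ≤ d2 ∧ d2 < e1 ∧ d2 < e2 ∧ e1 ≠ e2) :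
    ((∀ i ∈ Finset.Icc 1 d2, 0 ≤ uSeq x x' i) ∨
      (∀ i ∈ Finset.Icc 1 d2, uSeq x x' i ≤ 0)) ∧
    ((∀ i ∈ Finset.Icc (d2 + 1) n, 0 ≤ uSeq x x' i) ∨
      (∀ i ∈ Finset.Icc (d2 + 1) n, uSeq x x' i ≤ 0)) ∧
    (∀ i ∈ Finset.Icc 1 n, |uSeq x x' i| ≤ 1) :=
  stmt19_general n x x' hwt d1 e1 d2 e2 hd1 he1 hd2 he2 hE hcase
end
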